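/- Equivalence of the SIR recursion with its Boolean formulation: assume u_i(k) = 0 for all i and k (no external infection). Then for every agent i ∈ V and every k ∈ ℕ: x_i(k) = x^b_i(k), and s_i(k) ≥ R_i if and only if y^b_i(k) = 1. -/

import Mathlib

open Finset

/-- The step function `ρ : ℤ → {0,1}`, `ρ(z) = 1` iff `z > 0`. -/
def stepFn (z : ℤ) : ℕ := if 0 < z then 1 else 0

/-!
Both systems share the update "infected next ⇔ not yet recovered, and infected now or touched
by an infected neighbour", so the two infection states agree as long as the two notions of
recovery agree. In either system an agent is recovered at time `k` exactly when it was infected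
at some time `a` with `a + R ≤ k`: in the Boolean system because `y^b` is the running disjunction
of `x^b` delayed by `R - 1`, and in the counting system because an infected agent stays infected
until it has accumulated `R` infected steps. A strong induction on `k` then closes the loop.
-/

theorem stepFn_eq_one_iff (z : ℤ) : stepFn z = 1 ↔ 0 < z := by
  unfold stepFn; split_ifs <;> simp [*]

theorem stepFn_le_one (z : ℤ) : stepFn z ≤ 1 := by
  unfold stepFn; split_ifs <;> simp

theorem stepFn_mul_stepFn_eq_one_iff {ι : Type*} (N : Finset ι) (r s a : ℕ) (f g : ι → ℕ)
    (ha : a ≤ 1) (hf : ∀ j, f j ≤ 1) (hg : ∀ j, g j ≤ 1) :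
    stepFn ((r : ℤ) - s) * stepFn ((a : ℤ) + ∑ j ∈ N, (f j : ℤ) * (g j : ℤ)) = 1 ↔
      s < r ∧ (a = 1 ∨ ∃ j ∈ N, f j = 1 ∧ g j = 1) := by
  have hcast : (a : ℤ) + ∑ j ∈ N, (f j : ℤ) * (g j : ℤ) =
      ((a + ∑ j ∈ N, f j * g j : ℕ) : ℤ) := by
    push_cast; rfl
  rw [mul_eq_one, stepFn_eq_one_iff, stepFn_eq_one_iff, hcast, Nat.cast_pos, Nat.pos_iff_ne_zero,
    Ne, Nat.add_eq_zero_iff, Finset.sum_eq_zero_iff, not_and_or, not_forall]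
  refine and_congr (by omega) (or_congr (by omega) (exists_congr fun j => ?_))
  have := hf j; have := hg j
  simp only [Classical.not_imp, mul_eq_zero, not_or]
  exact and_congr_right fun _ => by omega

theorem Finset.sup_bool_eq_true_iff {ι : Type*} (N : Finset ι) (g : ι → Bool) :
    N.sup g = true ↔ ∃ j ∈ N, g j = true := by
  have h := Finset.le_sup_iff (s := N) (f := g) (a := ⊤) bot_lt_top
  simp only [top_le_iff] at h
  exact h

theorem bor_sup_and_not_eq_true_iff {ι : Type*} (N : Finset ι) (b y : Bool) (f : ι → ℕ)
    (g : ι → Bool) :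
    ((b || N.sup fun j => decide (f j = 1) && g j) && !y) = true ↔
      y = false ∧ (b = true ∨ ∃ j ∈ N, f j = 1 ∧ g j = true) := by
  simp only [Bool.and_eq_true, Bool.or_eq_true, Finset.sup_bool_eq_true_iff, Bool.not_eq_true',
    decide_eq_true_eq]
  tauto

theorem runningOr_eq_true_iff {X Y : ℤ → Bool} {R : ℕ} (hR : 1 ≤ R)
    (hX : ∀ k < 0, X k = false) (hY₀ : Y 0 = false)
    (hY : ∀ k : ℕ, Y ((k : ℤ) + 1) = (Y k || X ((k : ℤ) - R + 1))) (k : ℕ) :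
    Y k = true ↔ ∃ a : ℕ, a + R ≤ k ∧ X a = true := by
  induction k with
  | zero => simp only [Nat.cast_zero, hY₀, Bool.false_eq_true, false_iff]; omega
  | succ k ih =>
    rw [Nat.cast_succ, hY, Bool.or_eq_true, ih]
    by_cases hk : k + 1 < R
    · rw [hX _ (by omega), Bool.false_eq_true, or_false]
      exact exists_congr fun a => and_congr_left fun _ => by omega
    · rw [show (k : ℤ) - R + 1 = ((k + 1 - R : ℕ) : ℤ) by omega]
      constructor
      · rintro (⟨a, ha, hXa⟩ | h)
        exacts [⟨a, by omega, hXa⟩, ⟨_, by omega, h⟩]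
      · rintro ⟨a, ha, hXa⟩
        rcases (show a + R ≤ k ∨ a = k + 1 - R by omega) with ha' | rfl
        exacts [Or.inl ⟨a, ha', hXa⟩, Or.inr hXa]

/-- What the SIR recursion guarantees for a single agent, whatever its neighbours do. -/
structure IsSIRTrajectory (R : ℕ) (x s : ℕ → ℕ) : Prop where
  s_zero : s 0 = 0
  s_succ : ∀ k, s (k + 1) = s k + x k
  x_le_one : ∀ k, x k ≤ 1
  x_succ_of_lt : ∀ k, x k = 1 → s k < R → x (k + 1) = 1

namespace IsSIRTrajectory

variable {R : ℕ} {x s : ℕ → ℕ}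

theorem s_mono (h : IsSIRTrajectory R x s) : Monotone s :=
  monotone_nat_of_le_succ fun k => by rw [h.s_succ]; omega

theorem s_add_le (h : IsSIRTrajectory R x s) (t d : ℕ) : s (t + d) ≤ s t + d := by
  induction d with
  | zero => rfl
  | succ d ih => rw [← add_assoc, h.s_succ]; have := h.x_le_one (t + d); omega

theorem s_eq_zero (h : IsSIRTrajectory R x s) {t : ℕ} (hx : ∀ j < t, x j = 0) : s t = 0 := by
  induction t with
  | zero => exact h.s_zero
  | succ t ih => rw [h.s_succ, ih fun j hj => hx j (by omega), hx t (by omega)]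

theorem s_add_eq (h : IsSIRTrajectory R x s) {t d : ℕ}
    (hx : ∀ j, t ≤ j → j < t + d → x j = 1) : s (t + d) = s t + d := by
  induction d with
  | zero => rfl
  | succ d ih =>
    rw [← add_assoc, h.s_succ, ih fun j hj hjd => hx j hj (by omega),
      hx (t + d) (by omega) (by omega)]
    rfl

theorem x_eq_one_of_le (h : IsSIRTrajectory R x s) {t k : ℕ} (ht : x t = 1) (htk : t ≤ k)
    (hk : s k < R) : x k = 1 := by
  induction k, htk using Nat.le_induction with
  | base => exact ht
  | succ k _ ih =>
    have hsk : s k < R := (h.s_mono k.le_succ).trans_lt hk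
    exact h.x_succ_of_lt k (ih hsk) hsk

theorem le_s_iff (h : IsSIRTrajectory R x s) (hR : 1 ≤ R) (k : ℕ) :
    R ≤ s k ↔ ∃ a, a + R ≤ k ∧ x a = 1 := by
  constructor
  · intro hk
    by_contra! hnone
    have hsk : s k ≤ k := by simpa [h.s_zero] using h.s_add_le 0 k
    have h₀ : s (k + 1 - R) = 0 := h.s_eq_zero fun j hj => by
      have := h.x_le_one j; have := hnone j (by omega); omega
    have hle := h.s_add_le (k + 1 - R) (R - 1)
    rw [show k + 1 - R + (R - 1) = k by omega, h₀] at hle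
    omega
  · rintro ⟨a, hak, ha⟩
    by_contra! hk
    have hrun := h.s_add_eq (d := R) fun j haj hjR =>
      h.x_eq_one_of_le ha haj ((h.s_mono (by omega)).trans_lt hk)
    have := h.s_mono hak
    omega

end IsSIRTrajectory

theorem stmt8_general {V : Type*} [Fintype V]
    (E : V → V → Prop) [DecidableRel E]
    (R : V → ℕ) (hR : ∀ i, 1 ≤ R i)
    (c : ℕ → V → V → ℕ) (hc01 : ∀ k i j, c k i j ≤ 1)
    (u : ℕ → V → ℕ)
    (x0 : V → ℕ) (hx0 : ∀ i, x0 i ≤ 1)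
    (x s : ℕ → V → ℕ)
    (hx_init : ∀ i, x 0 i = x0 i)
    (hs_init : ∀ i, s 0 i = 0)
    (hx_rec : ∀ k i, x (k + 1) i =
      stepFn ((R i : ℤ) - (s k i : ℤ)) *
        stepFn ((x k i : ℤ) +
          (∑ j ∈ Finset.univ.filter (fun j => E j i), (c k i j : ℤ) * (x k j : ℤ)) +
          (u k i : ℤ)))
    (hs_rec : ∀ k i, s (k + 1) i = s k i + x k i)
    (hu0 : ∀ k i, u k i = 0)
    (xb yb : ℤ → V → Bool)
    (hxb_neg : ∀ k : ℤ, k < 0 → ∀ i, xb k i = false)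
    (hxb_init : ∀ i, (xb 0 i = true ↔ x0 i = 1))
    (hyb_init : ∀ i, yb 0 i = false)
    (hxb_rec : ∀ (k : ℕ) (i : V),
      xb ((k : ℤ) + 1) i =
        ((xb (k : ℤ) i ||
            (Finset.univ.filter (fun j => E j i)).sup
              (fun j => decide (c k i j = 1) && xb (k : ℤ) j)) &&
          !yb (k : ℤ) i))
    (hyb_rec : ∀ (k : ℕ) (i : V),
      yb ((k : ℤ) + 1) i = (yb (k : ℤ) i || xb ((k : ℤ) - (R i : ℤ) + 1) i)) :
    ∀ (i : V) (k : ℕ),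
      x k i = (if xb (k : ℤ) i then 1 else 0) ∧
      (R i ≤ s k i ↔ yb (k : ℤ) i = true) := by
  have hx01 : ∀ k i, x k i ≤ 1 := by
    rintro (_ | k) i
    · exact hx_init i ▸ hx0 i
    · exact hx_rec k i ▸ mul_le_one' (stepFn_le_one _) (stepFn_le_one _)
  have hx_succ : ∀ k i, x (k + 1) i = 1 ↔ s k i < R i ∧
      (x k i = 1 ∨ ∃ j ∈ univ.filter (E · i), c k i j = 1 ∧ x k j = 1) := by
    intro k i
    rw [hx_rec, hu0, Nat.cast_zero, add_zero]
    exact stepFn_mul_stepFn_eq_one_iff _ _ _ _ _ _ (hx01 k i) (hc01 k i) (hx01 k)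
  have hrecovered : ∀ k i, (∀ a < k, x a i = 1 ↔ xb a i = true) →
      (R i ≤ s k i ↔ yb k i = true) := by
    intro k i hagree
    have htraj : IsSIRTrajectory (R i) (x · i) (s · i) :=
      ⟨hs_init i, (hs_rec · i), (hx01 · i),
        fun k hx hs => (hx_succ k i).2 ⟨hs, Or.inl hx⟩⟩
    rw [htraj.le_s_iff (hR i),
      runningOr_eq_true_iff (Y := (yb · i)) (hR i) (hxb_neg · · i) (hyb_init i) (hyb_rec · i)]
    exact exists_congr fun a => and_congr_right fun ha => hagree a (by have := hR i; omega)
  have hagree : ∀ k i, x k i = 1 ↔ xb k i = true := by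
    intro k
    induction k using Nat.strong_induction_on with
    | _ k ih =>
      intro i
      rcases k with _ | k
      · simpa [hx_init] using (hxb_init i).symm
      · rw [hx_succ, Nat.cast_succ, hxb_rec, bor_sup_and_not_eq_true_iff, ← not_le,
          hrecovered k i fun a _ => ih a (by omega) i, Bool.not_eq_true]
        simp only [ih k k.lt_succ_self]
  intro i k
  refine ⟨?_, hrecovered k i fun a _ => hagree a i⟩
  have := hx01 k i
  split_ifs with hxb <;> simp only [← hagree k i] at hxb <;> omega

/-- Equivalence of the SIR recursion with its Boolean formulation: assuming no external
infection (`u ≡ 0`), for every agent `i` and time `k ∈ ℕ`: `x_i(k) = x^b_i(k)`, and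
`s_i(k) ≥ R_i` iff `y^b_i(k) = 1`. -/
theorem stmt8 {V : Type*} [Fintype V] [DecidableEq V]
    (E : V → V → Prop) [DecidableRel E]
    (hEsymm : ∀ i j, E i j ↔ E j i) (hEirr : ∀ i, ¬ E i i)
    (R : V → ℕ) (hR : ∀ i, 1 ≤ R i)
    (c : ℕ → V → V → ℕ) (hc01 : ∀ k i j, c k i j ≤ 1)
    (hcsymm : ∀ k i j, c k i j = c k j i)
    (u : ℕ → V → ℕ) (hu01 : ∀ k i, u k i ≤ 1)
    (x0 : V → ℕ) (hx0 : ∀ i, x0 i ≤ 1)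
    (x s : ℕ → V → ℕ)
    (hx_init : ∀ i, x 0 i = x0 i)
    (hs_init : ∀ i, s 0 i = 0)
    (hx_rec : ∀ k i, x (k + 1) i =
      stepFn ((R i : ℤ) - (s k i : ℤ)) *
        stepFn ((x k i : ℤ) +
          (∑ j ∈ Finset.univ.filter (fun j => E j i), (c k i j : ℤ) * (x k j : ℤ)) +
          (u k i : ℤ)))
    (hs_rec : ∀ k i, s (k + 1) i = s k i + x k i)
    (y : ℕ → V → ℕ)
    (hy : ∀ k i, y k i = 1 - stepFn ((R i : ℤ) - (s k i : ℤ)))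
    (hu0 : ∀ k i, u k i = 0)
    (xb yb : ℤ → V → Bool)
    (hxb_neg : ∀ k : ℤ, k < 0 → ∀ i, xb k i = false)
    (hxb_init : ∀ i, (xb 0 i = true ↔ x0 i = 1))
    (hyb_init : ∀ i, yb 0 i = false)
    (hxb_rec : ∀ (k : ℕ) (i : V),
      xb ((k : ℤ) + 1) i =
        ((xb (k : ℤ) i ||
            (Finset.univ.filter (fun j => E j i)).sup
              (fun j => decide (c k i j = 1) && xb (k : ℤ) j)) &&
          !yb (k : ℤ) i))
    (hyb_rec : ∀ (k : ℕ) (i : V),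
      yb ((k : ℤ) + 1) i = (yb (k : ℤ) i || xb ((k : ℤ) - (R i : ℤ) + 1) i)) :
    ∀ (i : V) (k : ℕ),
      x k i = (if xb (k : ℤ) i then 1 else 0) ∧
      (R i ≤ s k i ↔ yb (k : ℤ) i = true) :=
  stmt8_general E R hR c hc01 u x0 hx0 x s hx_init hs_init hx_rec hs_rec hu0 xb yb hxb_neg hxb_init
    hyb_init hxb_rec hyb_rec
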